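/- Let G be a finite multigraph and let S and T be disjoint subsets of V(G), with R = V(G) − S − T. Then the number q(S,T) of components Q of G−S−T with ‖V(Q),T‖ odd has the same parity as d_{G−S}(T). -/

import Mathlib

/-!
Modulo 2, an edge of `G − S` contributes to `d_{G−S}(T)` the number of its ends in `T`, so
edges inside `T` contribute nothing and `d_{G−S}(T) ≡ ‖R,T‖`. The components `Q` of `G[R]`
partition `R`, hence `‖R,T‖ = ∑_Q ‖V(Q),T‖`, and a sum of naturals is congruent mod 2 to
the number of its odd terms.
-/

open scoped Classical
noncomputable section

structure Multigraph (V : Type) (E : Type) where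
  inc : E → Sym2 V

namespace Multigraph

variable {V E : Type}

/-- The number of times vertex `v` occurs as an endpoint of the unordered pair `s`
(a loop at `v` counts twice). -/
def endCount (v : V) (s : Sym2 V) : ℕ :=
  Sym2.lift ⟨fun a b => (if a = v then 1 else 0) + (if b = v then 1 else 0),
    fun _ _ => add_comm _ _⟩ s

/-- The degree of a vertex in a multigraph (a loop contributes 2). -/
def degree [Fintype E] (G : Multigraph V E) (v : V) : ℕ :=
  ∑ e : E, endCount v (G.inc e)

/-- `G` has a spanning `ℓ`-regular subgraph (a set of edges giving each vertex degree `ℓ`). -/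
def HasFactor [Fintype E] (G : Multigraph V E) (ℓ : ℕ) : Prop :=
  ∃ F : Finset E, ∀ v : V, ∑ e ∈ F, endCount v (G.inc e) = ℓ

/-- One step along an edge not in `A`. -/
def Step (G : Multigraph V E) (A : Set E) (x y : V) : Prop :=
  ∃ e : E, e ∉ A ∧ G.inc e = s(x, y)

/-- The number of connected components of `G` after deleting the edges in `A`. -/
def numComponents (G : Multigraph V E) (A : Set E) : ℕ :=
  Nat.card (Quot (G.Step A))

/-- An edge is a cut-edge if deleting it increases the number of components. -/
def IsCutEdge (G : Multigraph V E) (e : E) : Prop :=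
  G.numComponents ∅ < G.numComponents {e}

/-- The number of cut-edges of `G`. -/
def cutEdgeCount (G : Multigraph V E) : ℕ :=
  Nat.card {e : E // G.IsCutEdge e}

/-- `‖A,B‖`: the number of edges with one endpoint in `A` and the other in `B`
(for disjoint `A` and `B`). -/
def edgesBetween (G : Multigraph V E) (A B : Set V) : ℕ :=
  Nat.card {e : E // ∃ a ∈ A, ∃ b ∈ B, G.inc e = s(a, b)}

/-- The degree of `v` in `G − S` (only edges with no endpoint in `S` count). -/
def degreeAvoid [Fintype E] (G : Multigraph V E) (S : Set V) (v : V) : ℕ :=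
  ∑ e : E, if ∀ u ∈ S, ¬ u ∈ G.inc e then endCount v (G.inc e) else 0

/-- `d_{G−S}(T)`: the sum over `v ∈ T` of the degree of `v` in `G − S`. -/
def degSumAvoid [Fintype V] [Fintype E] (G : Multigraph V E) (S T : Set V) : ℕ :=
  ∑ v : V, if v ∈ T then G.degreeAvoid S v else 0

/-- One step inside the vertex set `R`. -/
def StepIn (G : Multigraph V E) (R : Set V) (x y : V) : Prop :=
  x ∈ R ∧ y ∈ R ∧ ∃ e : E, G.inc e = s(x, y)

/-- Reachability within the vertex set `R`. -/
def ReachIn (G : Multigraph V E) (R : Set V) : V → V → Prop :=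
  Relation.ReflTransGen (G.StepIn R)

/-- The component of `v` in the submultigraph induced by `R`. -/
def componentIn (G : Multigraph V E) (R : Set V) (v : V) : Set V :=
  {w | G.ReachIn R v w}

/-- `C` is (the vertex set of) a component of the submultigraph induced by `R`. -/
def IsCompOf (G : Multigraph V E) (R : Set V) (C : Set V) : Prop :=
  ∃ v ∈ R, C = G.componentIn R v

/-- `q(S,T)`: the number of components `Q` of `G − S − T` with `‖V(Q),T‖` odd. -/
def oddComps (G : Multigraph V E) (S T : Set V) : ℕ :=
  Nat.card {C : Set V // G.IsCompOf ((S ∪ T)ᶜ) C ∧ Odd (G.edgesBetween C T)}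

end Multigraph

lemma Sym2.exists_mk_eq_mk_iff {V : Type*} {A B : Set V} {a b : V} :
    (∃ x ∈ A, ∃ y ∈ B, s(a, b) = s(x, y)) ↔ a ∈ A ∧ b ∈ B ∨ b ∈ A ∧ a ∈ B := by
  constructor
  · rintro ⟨x, hx, y, hy, hxy⟩
    rcases Sym2.eq_iff.mp hxy with ⟨rfl, rfl⟩ | ⟨rfl, rfl⟩
    exacts [.inl ⟨hx, hy⟩, .inr ⟨hx, hy⟩]
  · rintro (⟨ha, hb⟩ | ⟨hb, ha⟩)
    exacts [⟨a, ha, b, hb, rfl⟩, ⟨b, hb, a, ha, Sym2.eq_swap⟩]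

lemma ZMod.natCast_sum_eq_card_filter_odd {ι : Type*} (s : Finset ι) (f : ι → ℕ) :
    ((∑ i ∈ s, f i : ℕ) : ZMod 2) = (s.filter fun i => Odd (f i)).card := by
  rw [Nat.cast_sum, Finset.natCast_card_filter]
  refine Finset.sum_congr rfl fun i _ => ?_
  rcases Nat.even_or_odd (f i) with h | h
  · simp [ZMod.natCast_eq_zero_iff_even.mpr h, Nat.not_odd_iff_even.mpr h]
  · simp [ZMod.natCast_eq_one_iff_odd.mpr h, h]

namespace Multigraph

variable {V E : Type}

instance (G : Multigraph V E) (R : Set V) : Std.Symm (G.StepIn R) where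
  symm _ _ := fun ⟨hx, hy, e, he⟩ => ⟨hy, hx, e, he.trans Sym2.eq_swap⟩

section Components

variable {G : Multigraph V E} {R C C' : Set V} {v a : V}

lemma ReachIn.symm (h : G.ReachIn R v a) : G.ReachIn R a v :=
  Std.Symm.symm (r := Relation.ReflTransGen (G.StepIn R)) _ _ h

lemma ReachIn.mem (hv : v ∈ R) (h : G.ReachIn R v a) : a ∈ R := by
  induction h with
  | refl => exact hv
  | tail _ hstep _ => exact hstep.2.1

lemma mem_componentIn_self : v ∈ G.componentIn R v :=
  Relation.ReflTransGen.refl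

lemma componentIn_eq_of_mem (h : a ∈ G.componentIn R v) :
    G.componentIn R a = G.componentIn R v := by
  ext w
  exact ⟨h.trans, h.symm.trans⟩

lemma IsCompOf.subset (hC : G.IsCompOf R C) : C ⊆ R := by
  obtain ⟨v, hv, rfl⟩ := hC
  exact fun _ => ReachIn.mem hv

lemma IsCompOf.eq_of_mem (hC : G.IsCompOf R C) (hC' : G.IsCompOf R C') (ha : a ∈ C)
    (ha' : a ∈ C') : C = C' := by
  obtain ⟨v, -, rfl⟩ := hC
  obtain ⟨v', -, rfl⟩ := hC'
  rw [← componentIn_eq_of_mem ha, componentIn_eq_of_mem ha']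

end Components

lemma oddComps_eq_card_filter [Fintype V] (G : Multigraph V E) (S T : Set V) :
    G.oddComps S T = ((Finset.univ.filter (G.IsCompOf (S ∪ T)ᶜ)).filter
      fun C => Odd (G.edgesBetween C T)).card := by
  rw [oddComps, Nat.card_eq_fintype_card, Fintype.card_subtype, Finset.filter_filter]

lemma sum_ite_mem_endCount_mk [Fintype V] (T : Set V) (a b : V) :
    ∑ v, (if v ∈ T then endCount v s(a, b) else 0)
      = (if a ∈ T then 1 else 0) + (if b ∈ T then 1 else 0) := by
  have hcount (c : V) :
      ∑ v, (if v ∈ T then (if c = v then 1 else 0) else 0) = if c ∈ T then 1 else 0 := by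
    rw [← Finset.sum_filter, Finset.sum_ite_eq]; simp
  simp only [endCount, Sym2.lift_mk, ← hcount, ← Finset.sum_add_distrib]
  exact Finset.sum_congr rfl fun v _ => by split_ifs <;> rfl

lemma cast_sum_endCount_eq_ite_joins [Fintype V] {S T : Set V} (hST : Disjoint S T) (p : Sym2 V) :
    ((if ∀ u ∈ S, u ∉ p then ∑ v, (if v ∈ T then endCount v p else 0) else 0 : ℕ) : ZMod 2)
      = if ∃ a ∈ (S ∪ T)ᶜ, ∃ b ∈ T, p = s(a, b) then 1 else 0 := by
  induction p using Sym2.ind with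
  | _ a b =>
  have hT : ∀ x ∈ T, x ∉ S := fun x hx => Set.disjoint_right.mp hST hx
  have havoid : (∀ u ∈ S, u ∉ s(a, b)) ↔ a ∉ S ∧ b ∉ S := by
    simp only [Sym2.mem_iff]; grind
  simp only [Sym2.exists_mk_eq_mk_iff]
  simp only [havoid, sum_ite_mem_endCount_mk, Set.mem_compl_iff, Set.mem_union]
  by_cases haS : a ∈ S <;> by_cases hbS : b ∈ S <;> by_cases haT : a ∈ T <;>
    by_cases hbT : b ∈ T <;> simp_all [show (2 : ZMod 2) = 0 from rfl]

section EdgeCounts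

variable [Fintype E] (G : Multigraph V E)

def interedges (A B : Set V) : Finset E :=
  Finset.univ.filter fun e => ∃ a ∈ A, ∃ b ∈ B, G.inc e = s(a, b)

lemma edgesBetween_eq_card_interedges (A B : Set V) :
    G.edgesBetween A B = (G.interedges A B).card := by
  rw [edgesBetween, Nat.card_eq_fintype_card, Fintype.card_subtype, interedges]

lemma interedges_eq_biUnion [Fintype V] (R B : Set V) :
    G.interedges R B = (Finset.univ.filter (G.IsCompOf R)).biUnion (G.interedges · B) := by
  ext e
  simp only [interedges, Finset.mem_biUnion, Finset.mem_filter, Finset.mem_univ, true_and]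
  constructor
  · rintro ⟨a, ha, b, hb, he⟩
    exact ⟨_, ⟨a, ha, rfl⟩, a, mem_componentIn_self, b, hb, he⟩
  · rintro ⟨C, hC, a, haC, b, hb, he⟩
    exact ⟨a, hC.subset haC, b, hb, he⟩

lemma pairwiseDisjoint_interedges {R B : Set V} (hRB : Disjoint R B) :
    Set.PairwiseDisjoint {C | G.IsCompOf R C} (G.interedges · B) := by
  intro C hC C' hC' hne
  refine Finset.disjoint_left.mpr fun e he he' => hne ?_
  simp only [interedges, Finset.mem_filter, Finset.mem_univ, true_and] at he he'
  obtain ⟨a, haC, b, hb, he⟩ := he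
  obtain ⟨a', haC', b', hb', he'⟩ := he'
  rcases Sym2.eq_iff.mp (he.symm.trans he') with ⟨rfl, -⟩ | ⟨rfl, -⟩
  · exact hC.eq_of_mem hC' haC haC'
  · exact absurd hb' (Set.disjoint_left.mp hRB (hC.subset haC))

lemma edgesBetween_eq_sum_components [Fintype V] {R B : Set V} (hRB : Disjoint R B) :
    G.edgesBetween R B = ∑ C ∈ Finset.univ.filter (G.IsCompOf R), G.edgesBetween C B := by
  simp only [edgesBetween_eq_card_interedges, G.interedges_eq_biUnion R B]
  exact Finset.card_biUnion fun C hC C' hC' =>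
    G.pairwiseDisjoint_interedges hRB (Finset.mem_filter.mp hC).2 (Finset.mem_filter.mp hC').2

lemma degSumAvoid_eq_sum_edges [Fintype V] (S T : Set V) :
    G.degSumAvoid S T = ∑ e, if ∀ u ∈ S, u ∉ G.inc e then
      ∑ v, (if v ∈ T then endCount v (G.inc e) else 0) else 0 := by
  simp only [degSumAvoid, degreeAvoid, Finset.ite_sum_zero]
  rw [Finset.sum_comm]
  exact Finset.sum_congr rfl fun e _ => Finset.sum_congr rfl fun v _ => by split_ifs <;> rfl

lemma cast_degSumAvoid [Fintype V] {S T : Set V} (hST : Disjoint S T) :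
    (G.degSumAvoid S T : ZMod 2) = G.edgesBetween (S ∪ T)ᶜ T := by
  rw [degSumAvoid_eq_sum_edges, edgesBetween_eq_card_interedges, interedges,
    Finset.natCast_card_filter, Nat.cast_sum]
  exact Finset.sum_congr rfl fun e _ => by convert cast_sum_endCount_eq_ite_joins hST (G.inc e)

end EdgeCounts

end Multigraph

open Multigraph in
/-- For disjoint `S, T ⊆ V(G)`, the number `q(S,T)` of components `Q` of `G−S−T` with
`‖V(Q),T‖` odd has the same parity as `d_{G−S}(T)`. -/
theorem oddComps_parity
    {V E : Type} [Fintype V] [Fintype E] (G : Multigraph V E)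
    (S T : Set V) (hST : Disjoint S T) :
    G.oddComps S T % 2 = G.degSumAvoid S T % 2 := by
  have hRT : Disjoint (S ∪ T)ᶜ T := disjoint_compl_left.mono_right Set.subset_union_right
  rw [← ZMod.natCast_eq_natCast_iff', G.cast_degSumAvoid hST,
    G.edgesBetween_eq_sum_components hRT, ZMod.natCast_sum_eq_card_filter_odd,
    oddComps_eq_card_filter]
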